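/- Let H₁ and H₂ be bounded, self-adjoint linear operators on X, each satisfying ⟨H_i x, x⟩ ≥ c_i‖x‖² for some c_i > 0 (hence invertible), and let φ : X → ℝ ∪ {+∞} be proper, convex and lower semicontinuous. Fix z ∈ X, and suppose p₁ minimizes x ↦ φ(x) + ½⟨H₁(x − z), x − z⟩ over X and p₂ minimizes x ↦ φ(x) + ½⟨H₂(x − z), x − z⟩ over X. Then ‖p₁ − p₂‖ ≤ ‖H₁⁻¹‖ · ‖(H₁ − H₂)(z − p₂)‖. -/

import Mathlib

/-!
Testing the optimality of `pᵢ` along the segment towards any `x` and letting the step go to `0`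
gives the variational inequality `φ pᵢ ≤ φ x + ⟪Hᵢ (pᵢ - z), x - pᵢ⟫`. Adding the two instances
with `x = p₂` and `x = p₁` yields `⟪H₁ u, u⟫ ≤ ⟪(H₁ - H₂) (z - p₂), u⟫` for `u = p₁ - p₂`, and the
Cauchy–Schwarz inequality for the positive form `⟪H₁ ·, ·⟫` gives `‖u‖² ≤ ‖H₁⁻¹‖ ⟪H₁ u, u⟫`.
-/

open scoped RealInnerProductSpace
open Filter Topology

lemma le_of_forall_le_add_mul {a b K : ℝ} (h : ∀ t : ℝ, 0 < t → t ≤ 1 → a ≤ b + t * K) :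
    a ≤ b := by
  have hlim : Tendsto (fun t : ℝ => b + t * K) (𝓝[>] 0) (𝓝 b) := by
    have : Tendsto (fun t : ℝ => b + t * K) (𝓝 0) (𝓝 (b + 0 * K)) :=
      (continuous_const.add (continuous_id.mul continuous_const)).tendsto 0
    simpa using this.mono_left nhdsWithin_le_nhds
  refine ge_of_tendsto hlim ?_
  filter_upwards [Ioc_mem_nhdsGT zero_lt_one] with t ht using h t ht.1 ht.2

lemma WithTop.ne_top_of_forall_add_le {α : Type*} {φ : α → WithTop ℝ} {g : α → ℝ} {p : α}
    (hproper : ∃ x, φ x ≠ ⊤) (hp : ∀ x, φ p + g p ≤ φ x + g x) : φ p ≠ ⊤ := by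
  obtain ⟨x, hx⟩ := hproper
  intro htop
  have := hp x
  rw [htop, WithTop.top_add, top_le_iff] at this
  exact WithTop.add_ne_top.mpr ⟨hx, WithTop.coe_ne_top⟩ this

section

variable {X : Type*} [NormedAddCommGroup X] [InnerProductSpace ℝ X]

lemma LinearMap.IsSymmetric.inner_map_add_smul_self {T : X →ₗ[ℝ] X} (hT : T.IsSymmetric)
    (w v : X) (t : ℝ) :
    ⟪T (w + t • v), w + t • v⟫ = ⟪T w, w⟫ + 2 * t * ⟪T w, v⟫ + t ^ 2 * ⟪T v, v⟫ := by
  have hvw : ⟪T v, w⟫ = ⟪T w, v⟫ := by rw [hT, real_inner_comm]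
  simp only [map_add, map_smul, inner_add_left, inner_add_right, real_inner_smul_left,
    real_inner_smul_right, hvw]
  ring

lemma LinearMap.IsPositive.inner_map_sq_le {T : X →ₗ[ℝ] X} (hT : T.IsPositive) (x y : X) :
    ⟪T x, y⟫ ^ 2 ≤ ⟪T x, x⟫ * ⟪T y, y⟫ := by
  have hquad : ∀ t : ℝ, 0 ≤ ⟪T y, y⟫ * (t * t) + 2 * ⟪T x, y⟫ * t + ⟪T x, x⟫ := fun t => by
    have := hT.inner_nonneg_left (x + t • y)
    rw [hT.isSymmetric.inner_map_add_smul_self] at this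
    linarith
  have := discrim_le_zero hquad
  rw [discrim] at this
  nlinarith

lemma le_add_inner_of_forall_add_quadratic_le {T : X →ₗ[ℝ] X} (hT : T.IsSymmetric)
    {φ : X → WithTop ℝ}
    (hconv : ∀ x y : X, ∀ a b : ℝ, 0 ≤ a → 0 ≤ b → a + b = 1 →
      φ (a • x + b • y) ≤ (a : WithTop ℝ) * φ x + (b : WithTop ℝ) * φ y)
    {z p : X}
    (hp : ∀ x : X, φ p + ((2⁻¹ * ⟪T (p - z), p - z⟫ : ℝ) : WithTop ℝ)
        ≤ φ x + ((2⁻¹ * ⟪T (x - z), x - z⟫ : ℝ) : WithTop ℝ))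
    {x : X} {fp fx : ℝ} (hfp : φ p = fp) (hfx : φ x = fx) :
    fp ≤ fx + ⟪T (p - z), x - p⟫ := by
  refine le_of_forall_le_add_mul (K := ⟪T (x - p), x - p⟫ / 2) fun t ht0 ht1 => ?_
  have hy : (1 - t) • p + t • x - z = (p - z) + t • (x - p) := by module
  have hmin := hp ((1 - t) • p + t • x)
  have hcvx := hconv p x (1 - t) t (by linarith) ht0.le (by ring)
  rw [hfp, hfx] at hcvx
  rw [hfp, hy, hT.inner_map_add_smul_self] at hmin
  have hreal := hmin.trans (add_le_add_left hcvx _)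
  norm_cast at hreal
  refine le_of_mul_le_mul_left ?_ ht0
  nlinarith

lemma ContinuousLinearMap.sq_norm_le_opNorm_mul_inner_map {H G : X →L[ℝ] X}
    (hH : H.IsPositive) (hHG : H ∘L G = 1) (u : X) :
    ‖u‖ ^ 2 ≤ ‖G‖ * ⟪H u, u⟫ := by
  have hHGu : H (G u) = u := by simpa using congr($hHG u)
  have hcs : ⟪H u, G u⟫ ^ 2 ≤ ⟪H u, u⟫ * ⟪H (G u), G u⟫ :=
    hH.toLinearMap.inner_map_sq_le u (G u)
  have hleft : ⟪H u, G u⟫ = ‖u‖ ^ 2 := by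
    rw [hH.inner_left_eq_inner_right, hHGu, real_inner_self_eq_norm_sq]
  have hright : ⟪H (G u), G u⟫ ≤ ‖G‖ * ‖u‖ ^ 2 := by
    rw [hHGu]
    calc ⟪u, G u⟫ ≤ ‖u‖ * ‖G u‖ := real_inner_le_norm u (G u)
      _ ≤ ‖u‖ * (‖G‖ * ‖u‖) := by gcongr; exact G.le_opNorm u
      _ = ‖G‖ * ‖u‖ ^ 2 := by ring
  rcases (norm_nonneg u).eq_or_lt with hu | hu
  · rw [← hu, sq, zero_mul]
    exact mul_nonneg (norm_nonneg G) (hH.inner_nonneg_left u)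
  · refine le_of_mul_le_mul_right ?_ (pow_pos hu 2)
    calc ‖u‖ ^ 2 * ‖u‖ ^ 2 = ⟪H u, G u⟫ ^ 2 := by rw [hleft]; ring
      _ ≤ ⟪H u, u⟫ * ⟪H (G u), G u⟫ := hcs
      _ ≤ ⟪H u, u⟫ * (‖G‖ * ‖u‖ ^ 2) := by gcongr; exact hH.inner_nonneg_left u
      _ = ‖G‖ * ⟪H u, u⟫ * ‖u‖ ^ 2 := by ring

lemma ContinuousLinearMap.norm_le_opNorm_mul_norm_of_inner_map_le {H G : X →L[ℝ] X}
    (hH : H.IsPositive) (hHG : H ∘L G = 1) {u d : X} (h : ⟪H u, u⟫ ≤ ⟪d, u⟫) :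
    ‖u‖ ≤ ‖G‖ * ‖d‖ := by
  have hsq : ‖u‖ * ‖u‖ ≤ ‖G‖ * ‖d‖ * ‖u‖ :=
    calc ‖u‖ * ‖u‖ = ‖u‖ ^ 2 := by ring
      _ ≤ ‖G‖ * ⟪H u, u⟫ := sq_norm_le_opNorm_mul_inner_map hH hHG u
      _ ≤ ‖G‖ * (‖d‖ * ‖u‖) := by gcongr; exact h.trans (real_inner_le_norm d u)
      _ = ‖G‖ * ‖d‖ * ‖u‖ := by ring
  rcases (norm_nonneg u).eq_or_lt with hu | hu
  · rw [← hu]; positivity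
  · exact le_of_mul_le_mul_right hsq hu

end

theorem stmt_8_general {X : Type*} [NormedAddCommGroup X] [InnerProductSpace ℝ X]
    (H₁ H₂ : X →L[ℝ] X)
    (hH₁sa : ∀ x y : X, ⟪H₁ x, y⟫ = ⟪x, H₁ y⟫)
    (hH₂sa : ∀ x y : X, ⟪H₂ x, y⟫ = ⟪x, H₂ y⟫)
    (hH₁coer : ∃ c : ℝ, 0 < c ∧ ∀ x : X, c * ‖x‖ ^ 2 ≤ ⟪H₁ x, x⟫)
    (φ : X → WithTop ℝ)
    (hproper : ∃ x, φ x ≠ ⊤)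
    (hconv : ∀ x y : X, ∀ a b : ℝ, 0 ≤ a → 0 ≤ b → a + b = 1 →
      φ (a • x + b • y) ≤ (a : WithTop ℝ) * φ x + (b : WithTop ℝ) * φ y)
    (z p₁ p₂ : X)
    (hp₁ : ∀ x : X, φ p₁ + ((2⁻¹ * ⟪H₁ (p₁ - z), p₁ - z⟫ : ℝ) : WithTop ℝ)
        ≤ φ x + ((2⁻¹ * ⟪H₁ (x - z), x - z⟫ : ℝ) : WithTop ℝ))
    (hp₂ : ∀ x : X, φ p₂ + ((2⁻¹ * ⟪H₂ (p₂ - z), p₂ - z⟫ : ℝ) : WithTop ℝ)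
        ≤ φ x + ((2⁻¹ * ⟪H₂ (x - z), x - z⟫ : ℝ) : WithTop ℝ)) :
    ∀ H₁inv : X →L[ℝ] X, H₁inv ∘L H₁ = 1 → H₁ ∘L H₁inv = 1 →
      ‖p₁ - p₂‖ ≤ ‖H₁inv‖ * ‖(H₁ - H₂) (z - p₂)‖ := by
  intro G _ hH₁G
  obtain ⟨f₁, hf₁⟩ := WithTop.ne_top_iff_exists.mp (WithTop.ne_top_of_forall_add_le hproper hp₁)
  obtain ⟨f₂, hf₂⟩ := WithTop.ne_top_iff_exists.mp (WithTop.ne_top_of_forall_add_le hproper hp₂)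
  have hvar₁ : f₁ ≤ f₂ + ⟪H₁ (p₁ - z), p₂ - p₁⟫ :=
    le_add_inner_of_forall_add_quadratic_le (T := (H₁ : X →ₗ[ℝ] X)) hH₁sa hconv hp₁ hf₁.symm
      hf₂.symm
  have hvar₂ : f₂ ≤ f₁ + ⟪H₂ (p₂ - z), p₁ - p₂⟫ :=
    le_add_inner_of_forall_add_quadratic_le (T := (H₂ : X →ₗ[ℝ] X)) hH₂sa hconv hp₂ hf₂.symm
      hf₁.symm
  have hsum : ⟪H₁ (p₁ - z), p₂ - p₁⟫ + ⟪H₂ (p₂ - z), p₁ - p₂⟫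
      = ⟪(H₁ - H₂) (z - p₂), p₁ - p₂⟫ - ⟪H₁ (p₁ - p₂), p₁ - p₂⟫ := by
    rw [show p₁ - z = (p₁ - p₂) - (z - p₂) by abel, show p₂ - p₁ = -(p₁ - p₂) by abel,
      show p₂ - z = -(z - p₂) by abel]
    simp only [map_sub, map_neg, sub_apply, inner_sub_left, inner_neg_left, inner_neg_right]
    ring
  have hH₁pos : H₁.IsPositive := by
    obtain ⟨c, hc, hcoer⟩ := hH₁coer
    refine H₁.isPositive_iff.mpr ⟨hH₁sa, fun x => ?_⟩
    exact (by positivity : 0 ≤ c * ‖x‖ ^ 2).trans (hcoer x)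
  exact H₁.norm_le_opNorm_mul_norm_of_inner_map_le hH₁pos hH₁G (by linarith)

/-- Dependence of the proximity operator on the metric: if `p₁ = prox_φ^{H₁}(z)` and
`p₂ = prox_φ^{H₂}(z)` for bounded self-adjoint coercive operators `H₁, H₂`, then
`‖p₁ − p₂‖ ≤ ‖H₁⁻¹‖·‖(H₁ − H₂)(z − p₂)‖`. -/
theorem stmt_8 {X : Type*} [NormedAddCommGroup X] [InnerProductSpace ℝ X] [CompleteSpace X]
    (H₁ H₂ : X →L[ℝ] X)
    (hH₁sa : ∀ x y : X, ⟪H₁ x, y⟫ = ⟪x, H₁ y⟫)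
    (hH₂sa : ∀ x y : X, ⟪H₂ x, y⟫ = ⟪x, H₂ y⟫)
    (hH₁coer : ∃ c : ℝ, 0 < c ∧ ∀ x : X, c * ‖x‖ ^ 2 ≤ ⟪H₁ x, x⟫)
    (hH₂coer : ∃ c : ℝ, 0 < c ∧ ∀ x : X, c * ‖x‖ ^ 2 ≤ ⟪H₂ x, x⟫)
    (φ : X → WithTop ℝ)
    (hproper : ∃ x, φ x ≠ ⊤)
    (hconv : ∀ x y : X, ∀ a b : ℝ, 0 ≤ a → 0 ≤ b → a + b = 1 →
      φ (a • x + b • y) ≤ (a : WithTop ℝ) * φ x + (b : WithTop ℝ) * φ y)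
    (hlsc : LowerSemicontinuous φ)
    (z p₁ p₂ : X)
    (hp₁ : ∀ x : X, φ p₁ + ((2⁻¹ * ⟪H₁ (p₁ - z), p₁ - z⟫ : ℝ) : WithTop ℝ)
        ≤ φ x + ((2⁻¹ * ⟪H₁ (x - z), x - z⟫ : ℝ) : WithTop ℝ))
    (hp₂ : ∀ x : X, φ p₂ + ((2⁻¹ * ⟪H₂ (p₂ - z), p₂ - z⟫ : ℝ) : WithTop ℝ)
        ≤ φ x + ((2⁻¹ * ⟪H₂ (x - z), x - z⟫ : ℝ) : WithTop ℝ)) :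
    ∀ H₁inv : X →L[ℝ] X, H₁inv ∘L H₁ = 1 → H₁ ∘L H₁inv = 1 →
      ‖p₁ - p₂‖ ≤ ‖H₁inv‖ * ‖(H₁ - H₂) (z - p₂)‖ :=
  stmt_8_general H₁ H₂ hH₁sa hH₂sa hH₁coer φ hproper hconv z p₁ p₂ hp₁ hp₂
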